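/- arXiv:2103.07898 — 5 statements merged into one kernel-verified Lean document; each statement's English description precedes it below -/
import Mathlib

section
/- Let r be a smooth real-valued function germ at p in ℂⁿ, k a positive integer, and r_k its Taylor polynomial of order k at p. If γ is a nonconstant holomorphic curve germ at 0 with γ(0) = p and ν(r_k ∘ γ) < k·ν(γ), where ν denotes the order of vanishing at 0, then ν(r ∘ γ) = ν(r_k ∘ γ). -/
open Filter Asymptotics Topology

/-- The order of vanishing at `0` of a function `f : ℂ → E`: the supremum of all `k`
such that `f(t) = O(‖t‖^k)` as `t → 0`. -/
noncomputable def vord {E : Type*} [NormedAddCommGroup E] (f : ℂ → E) : ℕ∞ :=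
  sSup {m : ℕ∞ | ∃ k : ℕ, m = (k : ℕ∞) ∧ f =O[nhds (0 : ℂ)] fun t => ‖t‖ ^ k}

/-- `γ` is a nonconstant holomorphic curve germ at `p`. -/
def IsCurveGerm {n : ℕ} (p : Fin n → ℂ) (γ : ℂ → (Fin n → ℂ)) : Prop :=
  AnalyticAt ℂ γ 0 ∧ γ 0 = p ∧ ¬ (∀ᶠ t in nhds (0 : ℂ), γ t = p)

/-- `ν(γ)`: the minimum of the vanishing orders of the components of `γ - p`. -/
noncomputable def curveMult {n : ℕ} (p : Fin n → ℂ) (γ : ℂ → (Fin n → ℂ)) : ℕ∞ :=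
  vord (fun t => γ t - p)

/-- Ratio of two extended-natural vanishing orders, as an extended nonnegative real. -/
noncomputable def nuRatio (a b : ℕ∞) : ENNReal := (a : ENNReal) / (b : ENNReal)

/-- The Taylor polynomial of order `k` of `r` at `p`. -/
noncomputable def taylorPoly {E : Type*} [NormedAddCommGroup E] [NormedSpace ℝ E]
    (r : E → ℝ) (p : E) (k : ℕ) : E → ℝ :=
  fun z => ∑ i ∈ Finset.range (k + 1),
    ((i.factorial : ℝ))⁻¹ • iteratedFDeriv ℝ i r p (fun _ => z - p)

/-! ### Auxiliary lemmas about `vord` -/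

lemma isBigO_norm_pow_norm_pow {j m : ℕ} (h : j ≤ m) :
    (fun t : ℂ => ‖t‖ ^ m) =O[𝓝 (0 : ℂ)] fun t => ‖t‖ ^ j := by
  rw [isBigO_iff]
  refine ⟨1, ?_⟩
  have h1 : ∀ᶠ t : ℂ in 𝓝 0, ‖t‖ ≤ 1 := by
    filter_upwards [Metric.closedBall_mem_nhds (0 : ℂ) one_pos] with t ht
    simpa using mem_closedBall_zero_iff.mp ht
  filter_upwards [h1] with t ht
  have h2 : ‖t‖ ^ m ≤ ‖t‖ ^ j := pow_le_pow_of_le_one (norm_nonneg t) ht h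
  have h3 : (0:ℝ) ≤ ‖t‖ ^ j := pow_nonneg (norm_nonneg t) j
  calc ‖‖t‖ ^ m‖ = ‖t‖ ^ m := by simp
    _ ≤ ‖t‖ ^ j := h2
    _ = 1 * ‖‖t‖ ^ j‖ := by simp [abs_of_nonneg h3]

lemma le_vord_of_isBigO {E : Type*} [NormedAddCommGroup E] {f : ℂ → E} {m : ℕ}
    (h : f =O[𝓝 (0 : ℂ)] fun t => ‖t‖ ^ m) : (m : ℕ∞) ≤ vord f :=
  le_sSup ⟨m, rfl, h⟩

lemma isBigO_of_le_vord {E : Type*} [NormedAddCommGroup E] {f : ℂ → E} {m : ℕ}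
    (hm : m ≠ 0) (h : (m : ℕ∞) ≤ vord f) : f =O[𝓝 (0 : ℂ)] fun t => ‖t‖ ^ m := by
  by_contra hO
  have hle : vord f ≤ ((m - 1 : ℕ) : ℕ∞) := by
    apply sSup_le
    rintro x ⟨j, rfl, hj⟩
    by_contra hx
    push_neg at hx
    have hx' : (m - 1 : ℕ) < j := by exact_mod_cast hx
    have hjm : m ≤ j := by omega
    exact hO (hj.trans (isBigO_norm_pow_norm_pow hjm))
  have h2 : (m : ℕ∞) ≤ ((m - 1 : ℕ) : ℕ∞) := h.trans hle
  have h3 : m ≤ m - 1 := by exact_mod_cast h2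
  omega

lemma vord_congr {f g : ℂ → ℝ} {N : ℕ}
    (hfg : (fun t => f t - g t) =O[𝓝 (0 : ℂ)] fun t => ‖t‖ ^ N)
    (hg : ¬ g =O[𝓝 (0 : ℂ)] fun t => ‖t‖ ^ N) : vord f = vord g := by
  have key : ∀ j : ℕ, ((f =O[𝓝 (0:ℂ)] fun t => ‖t‖ ^ j) ↔ (g =O[𝓝 (0:ℂ)] fun t => ‖t‖ ^ j)) := by
    intro j
    rcases le_or_gt j N with hj | hj
    · have hfg' := hfg.trans (isBigO_norm_pow_norm_pow hj)
      constructor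
      · intro h
        have := h.sub hfg'
        simpa using this
      · intro h
        have := h.add hfg'
        simpa using this
    · constructor
      · intro h
        exfalso; apply hg
        have hfN : f =O[𝓝 (0:ℂ)] fun t => ‖t‖ ^ N := h.trans (isBigO_norm_pow_norm_pow hj.le)
        have := hfN.sub hfg
        simpa using this
      · intro h
        exfalso; apply hg
        exact h.trans (isBigO_norm_pow_norm_pow hj.le)
  unfold vord
  congr 1
  ext x
  simp only [Set.mem_setOf_eq]
  constructor
  · rintro ⟨j, rfl, hj⟩; exact ⟨j, rfl, (key j).mp hj⟩
  · rintro ⟨j, rfl, hj⟩; exact ⟨j, rfl, (key j).mpr hj⟩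

/-! ### Multivariate Taylor remainder bound -/

lemma taylor_remainder_isBigO {E : Type*} [NormedAddCommGroup E] [NormedSpace ℝ E]
    [ProperSpace E] {r : E → ℝ} {p : E} {U : Set E} (hU : U ∈ 𝓝 p) (hr : ContDiffOn ℝ (⊤ : ℕ∞) r U) (k : ℕ) :
    (fun z => r z - taylorPoly r p k z) =O[𝓝 p] fun z => ‖z - p‖ ^ (k + 1) := by
  obtain ⟨V, hVU, hVopen, hpV⟩ := mem_nhds_iff.mp hU
  have hrV : ContDiffOn ℝ (⊤ : ℕ∞) r V := hr.mono hVU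
  obtain ⟨ε, hε, hball⟩ := Metric.nhds_basis_closedBall.mem_iff.mp (hVopen.mem_nhds hpV)
  -- continuity of the (k+1)-st derivative on V, and a bound on the closed ball
  have hcont : ContinuousOn (iteratedFDeriv ℝ (k + 1) r) V := by
    have h1 : ContinuousOn (iteratedFDerivWithin ℝ (k + 1) r V) V :=
      hrV.continuousOn_iteratedFDerivWithin (by exact_mod_cast le_top) hVopen.uniqueDiffOn
    exact h1.congr (iteratedFDerivWithin_of_isOpen (k + 1) hVopen).symm
  obtain ⟨C, hC⟩ := (isCompact_closedBall p ε).exists_bound_of_continuousOn (hcont.mono hball)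
  -- differentiability of all iterated derivatives on V
  have hdiff : ∀ i : ℕ, DifferentiableOn ℝ (iteratedFDeriv ℝ i r) V := by
    intro i
    have h1 : DifferentiableOn ℝ (iteratedFDerivWithin ℝ i r V) V :=
      hrV.differentiableOn_iteratedFDerivWithin (m := i) (by exact_mod_cast WithTop.coe_lt_coe.mpr (ENat.coe_lt_top i)) hVopen.uniqueDiffOn
    exact h1.congr (fun x hx => ((iteratedFDerivWithin_of_isOpen i hVopen) hx).symm)
  rw [isBigO_iff]
  refine ⟨C / k.factorial, ?_⟩
  filter_upwards [Metric.ball_mem_nhds p hε] with z hz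
  set v : E := z - p with hv
  set ℓ : ℝ → E := fun s => p + s • v with hℓ
  have hvε : ‖v‖ < ε := by simpa [hv, Metric.mem_ball, dist_eq_norm] using hz
  have hmemball : ∀ s ∈ Set.Icc (0:ℝ) 1, ℓ s ∈ Metric.ball p ε := by
    intro s hs
    simp only [hℓ, Metric.mem_ball, dist_eq_norm, add_sub_cancel_left]
    calc ‖s • v‖ = |s| * ‖v‖ := by rw [norm_smul, Real.norm_eq_abs]
      _ ≤ 1 * ‖v‖ := by
          apply mul_le_mul_of_nonneg_right _ (norm_nonneg v)
          rw [abs_of_nonneg hs.1]; exact hs.2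
      _ = ‖v‖ := one_mul _
      _ < ε := hvε
  have hmemV : ∀ s ∈ Set.Icc (0:ℝ) 1, ℓ s ∈ V := fun s hs =>
    hball (Metric.ball_subset_closedBall (hmemball s hs))
  -- the derivative of s ↦ D^i r (ℓ s)(v,…,v)
  have hkey : ∀ i : ℕ, ∀ s ∈ Set.Icc (0:ℝ) 1,
      HasDerivAt (fun u => iteratedFDeriv ℝ i r (ℓ u) (fun _ => v))
        (iteratedFDeriv ℝ (i + 1) r (ℓ s) (fun _ => v)) s := by
    intro i s hs
    have hℓd : HasDerivAt ℓ v s := by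
      have h0 := ((hasDerivAt_id s).smul_const v).const_add p
      rw [one_smul] at h0
      exact h0
    have hd : HasFDerivAt (iteratedFDeriv ℝ i r)
        (fderiv ℝ (iteratedFDeriv ℝ i r) (ℓ s)) (ℓ s) :=
      (((hdiff i).differentiableAt (hVopen.mem_nhds (hmemV s hs)))).hasFDerivAt
    set A := ContinuousMultilinearMap.apply ℝ (fun _ : Fin i => E) ℝ (fun _ => v) with hA
    have hcomp := (A.hasFDerivAt.comp (ℓ s) hd).comp_hasDerivAt s hℓd
    have heq : iteratedFDeriv ℝ (i + 1) r (ℓ s) (fun _ => v)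
        = (A.comp (fderiv ℝ (iteratedFDeriv ℝ i r) (ℓ s))) v := by
      rw [iteratedFDeriv_succ_apply_left]
      rfl
    rw [heq]
    exact hcomp
  -- iterated derivatives within Icc 0 1 of φ := r ∘ ℓ
  have hwithin : ∀ i : ℕ, ∀ s ∈ Set.Icc (0:ℝ) 1,
      iteratedDerivWithin i (fun u => r (ℓ u)) (Set.Icc 0 1) s
        = iteratedFDeriv ℝ i r (ℓ s) (fun _ => v) := by
    intro i
    induction i with
    | zero =>
      intro s hs
      simp [iteratedDerivWithin_zero]
    | succ i ih =>
      intro s hs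
      rw [iteratedDerivWithin_succ]
      rw [derivWithin_congr (fun x hx => ih x hx) (ih s hs)]
      exact ((hkey i s hs).hasDerivWithinAt).derivWithin ((uniqueDiffOn_Icc one_pos) s hs)
  -- smoothness of φ on Icc 0 1
  have hℓsmooth : ContDiff ℝ (k + 1 : ℕ) ℓ := by
    apply ContDiff.add contDiff_const
    exact contDiff_id.smul contDiff_const
  have hφ : ContDiffOn ℝ (k + 1 : ℕ) (fun u => r (ℓ u)) (Set.Icc 0 1) :=
    (hrV.of_le (by exact_mod_cast le_top)).comp hℓsmooth.contDiffOn hmemV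
  -- bound on the (k+1)-st derivative of φ
  have hbound : ∀ y ∈ Set.Icc (0:ℝ) 1,
      ‖iteratedDerivWithin (k + 1) (fun u => r (ℓ u)) (Set.Icc 0 1) y‖ ≤ C * ‖v‖ ^ (k + 1) := by
    intro y hy
    rw [hwithin (k + 1) y hy]
    calc ‖iteratedFDeriv ℝ (k + 1) r (ℓ y) (fun _ => v)‖
        ≤ ‖iteratedFDeriv ℝ (k + 1) r (ℓ y)‖ * ∏ _i : Fin (k + 1), ‖v‖ :=
          (iteratedFDeriv ℝ (k + 1) r (ℓ y)).le_opNorm _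
      _ ≤ C * ‖v‖ ^ (k + 1) := by
          rw [Finset.prod_const, Finset.card_univ, Fintype.card_fin]
          exact mul_le_mul_of_nonneg_right
            (hC (ℓ y) (Metric.ball_subset_closedBall (hmemball y hy)))
            (pow_nonneg (norm_nonneg v) _)
  have hmain := taylor_mean_remainder_bound (f := fun u => r (ℓ u)) zero_le_one hφ
    (Set.right_mem_Icc.mpr zero_le_one) hbound
  -- identify the two sides
  have hφ1 : r (ℓ 1) = r z := by
    simp [hℓ, hv]
  have htp : taylorWithinEval (fun u => r (ℓ u)) k (Set.Icc 0 1) 0 1 = taylorPoly r p k z := by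
    rw [taylor_within_apply]
    unfold taylorPoly
    apply Finset.sum_congr rfl
    intro i _
    rw [hwithin i 0 (Set.left_mem_Icc.mpr zero_le_one)]
    simp [hℓ, hv]
  simp only [hφ1, htp] at hmain
  have : ‖r z - taylorPoly r p k z‖ ≤ C / k.factorial * ‖z - p‖ ^ (k + 1) := by
    refine hmain.trans (le_of_eq ?_)
    rw [← hv]
    field_simp
    simp
  calc ‖r z - taylorPoly r p k z‖ ≤ C / k.factorial * ‖z - p‖ ^ (k + 1) := this
    _ = C / k.factorial * ‖‖z - p‖ ^ (k + 1)‖ := by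
        rw [Real.norm_eq_abs, abs_of_nonneg (pow_nonneg (norm_nonneg _) _)]

/-- If `r` is a smooth real-valued germ at `p`, `r_k` its Taylor polynomial of
order `k` at `p`, and `γ` a nonconstant holomorphic curve germ at `p` with
`ν(r_k ∘ γ) < k · ν(γ)`, then `ν(r ∘ γ) = ν(r_k ∘ γ)`. -/
theorem taylor_order_along_curve {n : ℕ} (p : Fin n → ℂ) (r : (Fin n → ℂ) → ℝ)
    (hr : ∃ U ∈ nhds p, ContDiffOn ℝ (⊤ : ℕ∞) r U)
    (k : ℕ) (hk : 0 < k)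
    (γ : ℂ → (Fin n → ℂ)) (hγ : IsCurveGerm p γ)
    (hlt : vord ((taylorPoly r p k) ∘ γ) < (k : ℕ∞) * curveMult p γ) :
    vord (r ∘ γ) = vord ((taylorPoly r p k) ∘ γ) := by
  obtain ⟨U, hU, hrU⟩ := hr
  obtain ⟨hγa, hγ0, -⟩ := hγ
  set T := taylorPoly r p k with hT
  have hVfin : vord (T ∘ γ) ≠ ⊤ := (hlt.trans_le le_top).ne
  set v := (vord (T ∘ γ)).toNat with hvdef
  have hv : vord (T ∘ γ) = (v : ℕ∞) := (ENat.coe_toNat hVfin).symm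
  set M := v / k + 1 with hM
  set N := k * M with hN
  have hMpos : M ≠ 0 := Nat.succ_ne_zero _
  have hVN : vord (T ∘ γ) < (N : ℕ∞) := by
    rw [hv]
    have h1 : v < M * k := (Nat.div_lt_iff_lt_mul hk).mp (by rw [hM]; exact Nat.lt_succ_self _)
    have h2 : v < N := by rw [hN, Nat.mul_comm]; exact h1
    exact Nat.cast_lt.mpr h2
  have hMle : (M : ℕ∞) ≤ curveMult p γ := by
    by_contra hMc
    push_neg at hMc
    have hcn : curveMult p γ ≠ ⊤ := (hMc.trans_le le_top).ne
    set c := (curveMult p γ).toNat with hcdef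
    have hc : curveMult p γ = (c : ℕ∞) := (ENat.coe_toNat hcn).symm
    rw [hc] at hMc hlt
    have hc1 : c < M := Nat.cast_lt.mp hMc
    rw [hM] at hc1
    have hc2 : c ≤ v / k := Nat.lt_succ_iff.mp hc1
    have h3 : k * c ≤ v := by
      calc k * c ≤ k * (v / k) := Nat.mul_le_mul le_rfl hc2
        _ = v / k * k := Nat.mul_comm _ _
        _ ≤ v := Nat.div_mul_le_self v k
    have h4 : (k : ℕ∞) * (c : ℕ∞) ≤ (v : ℕ∞) := by exact_mod_cast h3
    rw [← hv] at h4
    exact absurd (hlt.trans_le h4) (lt_irrefl _)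
  have hγO : (fun t => γ t - p) =O[𝓝 (0:ℂ)] fun t => ‖t‖ ^ M :=
    isBigO_of_le_vord hMpos hMle
  have hrem := taylor_remainder_isBigO hU hrU k
  have htend : Tendsto γ (𝓝 (0:ℂ)) (𝓝 p) := by
    rw [← hγ0]
    exact hγa.continuousAt
  have hcomp : (fun t => r (γ t) - T (γ t)) =O[𝓝 (0:ℂ)] fun t => ‖γ t - p‖ ^ (k + 1) :=
    hrem.comp_tendsto htend
  have hpow : (fun t => ‖γ t - p‖ ^ (k + 1)) =O[𝓝 (0:ℂ)] fun t => ‖t‖ ^ N := by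
    have h1 := (hγO.norm_left).pow (k + 1)
    have h2 : (fun t : ℂ => (‖t‖ ^ M) ^ (k + 1)) = fun t : ℂ => ‖t‖ ^ (M * (k + 1)) := by
      funext t; rw [← pow_mul]
    rw [h2] at h1
    exact h1.trans (isBigO_norm_pow_norm_pow (by
      rw [hN, Nat.mul_comm k M]; exact Nat.mul_le_mul le_rfl (Nat.le_succ k)))
  have hRN : (fun t => r (γ t) - T (γ t)) =O[𝓝 (0:ℂ)] fun t => ‖t‖ ^ N := hcomp.trans hpow
  have hTnot : ¬ (T ∘ γ) =O[𝓝 (0:ℂ)] fun t => ‖t‖ ^ N := by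
    intro h
    exact absurd (le_vord_of_isBigO h) (not_le.mpr hVN)
  exact vord_congr hRN hTnot
end

section
/- Every real-valued polynomial r on ℂⁿ of degree at most k can be written as r = Re(h) + Σ_{j=1}^{N} |f_j|² − Σ_{j=1}^{N} |g_j|², where h is a holomorphic polynomial, f = (f₁,…,f_N) and g = (g₁,…,g_N) are tuples of holomorphic polynomials, and N depends only on n and k. -/
/-!
Write `P(z, z̄) = ∑ c_{αβ} z^α z̄^β` and read each term as `a · conj b` with the holomorphic
monomials `a = c_{αβ} z^α`, `b = z^β`. The polarization identity
`Re (a · conj b) = |(a + b)/2|² - |(a - b)/2|²` turns the real part into a difference of sums of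
squares, one pair per exponent `(α, β)`. Every entry of an exponent is at most `k`, so
`N = (k + 1)^(2n)` pairs suffice, and `h = 0`.
-/

open MvPolynomial ComplexConjugate

theorem Complex.re_mul_conj_eq_norm_sq_sub (a b : ℂ) :
    (a * conj b).re = ‖(a + b) / 2‖ ^ 2 - ‖(a - b) / 2‖ ^ 2 := by
  simp only [norm_div, div_pow, ← Complex.normSq_eq_norm_sq, Complex.normSq_add,
    Complex.normSq_sub, Complex.norm_two]
  ring

namespace MvPolynomial

variable {R τ : Type*} [CommSemiring R] [Fintype τ]

noncomputable def boundedExponent {k : ℕ} (e : τ → Fin (k + 1)) : τ →₀ ℕ :=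
  Finsupp.equivFunOnFinite.symm fun i => e i

theorem boundedExponent_injective (k : ℕ) :
    Function.Injective (boundedExponent : (τ → Fin (k + 1)) → τ →₀ ℕ) := by
  intro e e' h
  funext i
  exact Fin.val_injective (DFunLike.congr_fun h i)

theorem eq_sum_monomial_of_degreeOf_le [DecidableEq τ] {P : MvPolynomial τ R} {k : ℕ}
    (hP : ∀ i, P.degreeOf i ≤ k) :
    P = ∑ e : τ → Fin (k + 1),
      monomial (boundedExponent e) (P.coeff (boundedExponent e)) := by
  rw [← Finset.sum_image (f := fun d => monomial d (P.coeff d))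
    fun e _ e' _ h => boundedExponent_injective k h]
  conv_lhs => rw [P.as_sum]
  refine Finset.sum_subset (fun d hd => ?_) (fun d _ hd => ?_)
  · refine Finset.mem_image.2 ⟨fun i => ⟨d i, Nat.lt_succ_of_le ?_⟩, Finset.mem_univ _, ?_⟩
    · exact (monomial_le_degreeOf i hd).trans (hP i)
    · ext i; rfl
  · rw [notMem_support_iff.1 hd, monomial_zero]

theorem eval_monomial_boundedExponent {k : ℕ} (x : τ → R) (e : τ → Fin (k + 1)) (c : R) :
    eval x (monomial (boundedExponent e) c) = c * ∏ i, x i ^ (e i : ℕ) := by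
  rw [eval_monomial, Finsupp.prod_fintype _ _ fun i => pow_zero _]
  rfl

variable {σ : Type*} [Fintype σ]

theorem eval_sum_elim_conj_monomial_boundedExponent {k : ℕ} (z : σ → ℂ)
    (e : σ ⊕ σ → Fin (k + 1)) (c : ℂ) :
    eval (Sum.elim z (fun j => conj (z j))) (monomial (boundedExponent e) c)
      = eval z (monomial (boundedExponent (e ∘ Sum.inl)) c)
        * conj (eval z (monomial (boundedExponent (e ∘ Sum.inr)) 1)) := by
  simp only [eval_monomial_boundedExponent, Fintype.prod_sum_type, Sum.elim_inl, Sum.elim_inr,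
    Function.comp_apply, map_prod, map_pow, one_mul]
  ring

theorem exists_re_eval_conj_eq_sum_norm_sq_sub [DecidableEq σ] (k : ℕ)
    (P : MvPolynomial (σ ⊕ σ) ℂ) (hP : P.totalDegree ≤ k) :
    ∃ f g : (σ ⊕ σ → Fin (k + 1)) → MvPolynomial σ ℂ, ∀ z : σ → ℂ,
      (eval (Sum.elim z (fun j => conj (z j))) P).re
        = ∑ e, ‖eval z (f e)‖ ^ 2 - ∑ e, ‖eval z (g e)‖ ^ 2 := by
  let A := fun e : σ ⊕ σ → Fin (k + 1) =>
    monomial (boundedExponent (e ∘ Sum.inl)) (P.coeff (boundedExponent e))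
  let B := fun e : σ ⊕ σ → Fin (k + 1) => monomial (boundedExponent (e ∘ Sum.inr)) (1 : ℂ)
  refine ⟨fun e => C 2⁻¹ * (A e + B e), fun e => C 2⁻¹ * (A e - B e), fun z => ?_⟩
  conv_lhs => rw [eq_sum_monomial_of_degreeOf_le fun i => (degreeOf_le_totalDegree P i).trans hP]
  simp only [map_sum, eval_sum_elim_conj_monomial_boundedExponent, Complex.re_sum,
    Complex.re_mul_conj_eq_norm_sq_sub, Finset.sum_sub_distrib, map_mul, map_add, map_sub,
    eval_C, inv_mul_eq_div, A, B]

end MvPolynomial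

/-- D'Angelo's decomposition. Every real-valued polynomial `r` on `ℂⁿ` of
degree at most `k` (a polynomial in `z` and `z̄`) can be written as
`r = Re h + ∑_{j=1}^N |f_j|² − ∑_{j=1}^N |g_j|²` with `h, f_j, g_j` holomorphic polynomials,
where `N` depends only on `n` and `k`. -/
theorem dangelo_decomposition (n k : ℕ) :
    ∃ N : ℕ, ∀ P : MvPolynomial (Fin n ⊕ Fin n) ℂ, P.totalDegree ≤ k →
      (∀ z : Fin n → ℂ,
        (MvPolynomial.eval (Sum.elim z fun j => starRingEnd ℂ (z j)) P).im = 0) →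
      ∃ (h : MvPolynomial (Fin n) ℂ) (f g : Fin N → MvPolynomial (Fin n) ℂ),
        ∀ z : Fin n → ℂ,
          (MvPolynomial.eval (Sum.elim z fun j => starRingEnd ℂ (z j)) P).re
            = (MvPolynomial.eval z h).re
              + ∑ j, ‖MvPolynomial.eval z (f j)‖ ^ 2
              - ∑ j, ‖MvPolynomial.eval z (g j)‖ ^ 2 := by
  let E := (Fintype.equivFin (Fin n ⊕ Fin n → Fin (k + 1))).symm
  refine ⟨Fintype.card (Fin n ⊕ Fin n → Fin (k + 1)), fun P hP _ => ?_⟩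
  obtain ⟨f, g, hfg⟩ := exists_re_eval_conj_eq_sum_norm_sq_sub k P hP
  refine ⟨0, f ∘ E, g ∘ E, fun z => ?_⟩
  simp only [Function.comp_apply]
  rw [E.sum_comp (fun e => ‖eval z (f e)‖ ^ 2),
    E.sum_comp (fun e => ‖eval z (g e)‖ ^ 2), map_zero, Complex.zero_re, zero_add]
  exact hfg z
end

section
/- Let r = Re(h) + ‖f‖² − ‖g‖² where h is a holomorphic function germ at p ∈ ℂⁿ and f, g are holomorphic mappings into ℂᴺ. For any unitary matrix U ∈ U(N), let I(U) be the ideal of holomorphic germs generated by h and the components of f − Ug. Then for every nonconstant holomorphic curve germ γ at p, inf_{φ ∈ I(U)} ν(φ ∘ γ) ≤ ν(r ∘ γ). -/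
open Filter Asymptotics Topology

/-- The algebra of germs of `ℂ`-valued functions: `ℂ` acts through constant germs. -/
noncomputable instance germAlgebra {α : Type*} (l : Filter α) : Algebra ℂ (l.Germ ℂ) :=
  ((Filter.Germ.coeRingHom l).comp (Pi.constRingHom α ℂ)).toAlgebra

/-- The ring `O_p` of germs at `p` of holomorphic functions on `ℂⁿ`, realized as a
subalgebra of the algebra of germs at `p` of all `ℂ`-valued functions. -/
noncomputable def holGerms {n : ℕ} (p : Fin n → ℂ) : Subalgebra ℂ ((nhds p).Germ ℂ) where
  carrier := {g | ∃ f : (Fin n → ℂ) → ℂ, AnalyticAt ℂ f p ∧ g = (f : (nhds p).Germ ℂ)}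
  mul_mem' := by
    rintro _ _ ⟨f, hf, rfl⟩ ⟨g, hg, rfl⟩
    exact ⟨f * g, hf.mul hg, rfl⟩
  add_mem' := by
    rintro _ _ ⟨f, hf, rfl⟩ ⟨g, hg, rfl⟩
    exact ⟨f + g, hf.add hg, rfl⟩
  algebraMap_mem' := fun c => ⟨fun _ => c, analyticAt_const, rfl⟩

/-- The vanishing order along a curve `γ` of a germ `g` at `p = γ(0)`: the common value of
`ν(f ∘ γ)` over all representatives `f` of the germ `g`. -/
noncomputable def ordAlong {n : ℕ} {p : Fin n → ℂ} (γ : ℂ → (Fin n → ℂ))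
    (g : (nhds p).Germ ℂ) : ℕ∞ :=
  sSup {m : ℕ∞ | ∃ f : (Fin n → ℂ) → ℂ, (f : (nhds p).Germ ℂ) = g ∧ m = vord (f ∘ γ)}

/-! Along `γ`, a germ `φ` of the ideal with `ν(φ ∘ γ) ≥ k` is `O(|t|^k)`. Since `U` is unitary,
`r = Re h + Σ (|f_j|² − |(Ug)_j|²)`, and `|f_j|² − |(Ug)_j|² = (|f_j| − |(Ug)_j|)(|f_j| + |(Ug)_j|)` is
bounded by `|f_j − (Ug)_j|` times a bounded factor. Hence if the generators `h` and `f_j − (Ug)_j`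
are `O(|t|^k)` along `γ`, so is `r ∘ γ`. -/

open Matrix

lemma sum_norm_sq_eq_re_star_dotProduct {ι 𝕜 : Type*} [Fintype ι] [RCLike 𝕜] (v : ι → 𝕜) :
    ∑ j, ‖v j‖ ^ 2 = RCLike.re (star v ⬝ᵥ v) := by
  simp only [dotProduct, Pi.star_apply, RCLike.star_def, RCLike.conj_mul, map_sum,
    ← RCLike.ofReal_pow, RCLike.ofReal_re]

lemma sum_norm_sq_mulVec_of_mem_unitaryGroup {ι 𝕜 : Type*} [Fintype ι] [DecidableEq ι]
    [RCLike 𝕜] {U : Matrix ι ι 𝕜} (hU : U ∈ unitaryGroup ι 𝕜) (v : ι → 𝕜) :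
    ∑ j, ‖(U *ᵥ v) j‖ ^ 2 = ∑ j, ‖v j‖ ^ 2 := by
  rw [sum_norm_sq_eq_re_star_dotProduct, sum_norm_sq_eq_re_star_dotProduct, star_mulVec,
    dotProduct_mulVec, vecMul_vecMul, ← star_eq_conjTranspose, Unitary.star_mul_self_of_mem hU,
    vecMul_one]

lemma Asymptotics.IsBigO.norm_sq_sub_norm_sq {α E : Type*} [SeminormedAddCommGroup E]
    {l : Filter α} {u v : α → E} {w : α → ℝ} (hu : u =O[l] fun _ => (1 : ℝ))
    (hv : v =O[l] fun _ => (1 : ℝ)) (huv : (fun x => u x - v x) =O[l] w) :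
    (fun x => ‖u x‖ ^ 2 - ‖v x‖ ^ 2) =O[l] w := by
  have hdiff : (fun x => ‖u x‖ - ‖v x‖) =O[l] w :=
    (IsBigO.of_bound 1 (Eventually.of_forall fun x => by
      simpa using abs_norm_sub_norm_le (u x) (v x))).trans huv
  simpa only [sq_sub_sq, one_mul] using (hu.norm_left.add hv.norm_left).mul hdiff

lemma norm_pow_isBigO_norm_pow {j k : ℕ} (hkj : k ≤ j) :
    (fun t : ℂ => ‖t‖ ^ j) =O[𝓝 0] fun t => ‖t‖ ^ k := by
  rcases hkj.eq_or_lt with rfl | hlt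
  · exact isBigO_refl _ _
  · exact (isLittleO_norm_pow_norm_pow hlt).isBigO

section vord

variable {E : Type*} [NormedAddCommGroup E] {f : ℂ → E}

lemma natCast_le_vord_iff {k : ℕ} (hk : 0 < k) :
    (k : ℕ∞) ≤ vord f ↔ f =O[𝓝 0] fun t => ‖t‖ ^ k := by
  refine ⟨fun hle => ?_, fun hO => le_sSup ⟨k, rfl, hO⟩⟩
  by_contra hO
  have hbound : vord f ≤ (k - 1 : ℕ) := sSup_le <| by
    rintro _ ⟨j, rfl, hj⟩
    have hjk : j < k := lt_of_not_ge fun hkj => hO (hj.trans (norm_pow_isBigO_norm_pow hkj))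
    exact_mod_cast Nat.le_sub_one_of_lt hjk
  have := hle.trans hbound
  norm_cast at this
  omega

lemma vord_congr_s3 {g : ℂ → E} (h : f =ᶠ[𝓝 0] g) : vord f = vord g := by
  simp only [vord, isBigO_congr h EventuallyEq.rfl]

end vord

section ordAlong

variable {n : ℕ} {p : Fin n → ℂ} {γ : ℂ → Fin n → ℂ}

lemma ordAlong_coe (hγ : Tendsto γ (𝓝 0) (𝓝 p)) (φ : (Fin n → ℂ) → ℂ) :
    ordAlong γ (φ : (𝓝 p).Germ ℂ) = vord (φ ∘ γ) := by
  have hreps : {m : ℕ∞ | ∃ ψ : (Fin n → ℂ) → ℂ,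
      (ψ : (𝓝 p).Germ ℂ) = φ ∧ m = vord (ψ ∘ γ)} = {vord (φ ∘ γ)} := by
    ext m
    refine ⟨?_, fun hm => ⟨φ, rfl, hm⟩⟩
    rintro ⟨ψ, hψ, rfl⟩
    exact vord_congr_s3 ((Germ.coe_eq.mp hψ).comp_tendsto hγ)
  rw [ordAlong, hreps, sSup_singleton]

lemma isBigO_comp_of_le_iInf_ordAlong (hγ : Tendsto γ (𝓝 0) (𝓝 p)) {I : Ideal (holGerms p)}
    {φ : (Fin n → ℂ) → ℂ} (hφ : AnalyticAt ℂ φ p) (hmem : (⟨φ, φ, hφ, rfl⟩ : holGerms p) ∈ I)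
    {k : ℕ} (hk : 0 < k) (hle : (k : ℕ∞) ≤ ⨅ ψ ∈ I, ordAlong γ (ψ : (𝓝 p).Germ ℂ)) :
    (φ ∘ γ) =O[𝓝 0] fun t => ‖t‖ ^ k := by
  rw [← natCast_le_vord_iff hk, ← ordAlong_coe hγ]
  exact hle.trans (iInf₂_le _ hmem)

end ordAlong

/-- Jiri–McNeal / D'Angelo. Let `r = Re h + ‖f‖² − ‖g‖²` with `h, f, g`
holomorphic at `p`, and for a unitary `U` let `I(U)` be the ideal of holomorphic germs at `p`
generated by `h` and the components of `f − Ug`. Then for every nonconstant holomorphic curve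
germ `γ` at `p`, `inf_{φ ∈ I(U)} ν(φ ∘ γ) ≤ ν(r ∘ γ)`. -/
theorem ideal_order_le_order {n N : ℕ} (p : Fin n → ℂ)
    (h : (Fin n → ℂ) → ℂ) (f g : (Fin n → ℂ) → Fin N → ℂ)
    (hh : AnalyticAt ℂ h p) (hf : AnalyticAt ℂ f p) (hg : AnalyticAt ℂ g p)
    (r : (Fin n → ℂ) → ℝ)
    (hr : ∀ z, r z = (h z).re + ∑ j, ‖f z j‖ ^ 2 - ∑ j, ‖g z j‖ ^ 2)
    (U : Matrix.unitaryGroup (Fin N) ℂ)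
    (IU : Ideal (holGerms p))
    (hIU : IU = Ideal.span {x : holGerms p |
      (x : (nhds p).Germ ℂ) = (h : (nhds p).Germ ℂ) ∨
      ∃ j, (x : (nhds p).Germ ℂ)
        = ((fun z => f z j - (U : Matrix (Fin N) (Fin N) ℂ).mulVec (g z) j) :
            (nhds p).Germ ℂ)})
    (γ : ℂ → (Fin n → ℂ)) (hγ : IsCurveGerm p γ) :
    (⨅ φ ∈ IU, ordAlong γ (φ : (nhds p).Germ ℂ)) ≤ vord (r ∘ γ) := by
  subst hIU
  obtain ⟨hγa, hγ0, -⟩ := hγ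
  have hγc : Tendsto γ (𝓝 0) (𝓝 p) := hγ0 ▸ hγa.continuousAt.tendsto
  set V := (U : Matrix (Fin N) (Fin N) ℂ)
  have hfj (j) : AnalyticAt ℂ (fun z => f z j) p := analyticAt_pi_iff.mp hf j
  have hVgj (j) : AnalyticAt ℂ (fun z => (V *ᵥ g z) j) p :=
    analyticAt_pi_iff.mp ((V.mulVecLin.toContinuousLinearMap.analyticAt _).comp hg) j
  have hbdd {φ : (Fin n → ℂ) → ℂ} (hφ : AnalyticAt ℂ φ p) : (φ ∘ γ) =O[𝓝 0] fun _ => (1 : ℝ) :=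
    (hφ.continuousAt.tendsto.comp hγc).isBigO_one ℝ
  have hrγ : r ∘ γ = fun t =>
      (h (γ t)).re + ∑ j, (‖f (γ t) j‖ ^ 2 - ‖(V *ᵥ g (γ t)) j‖ ^ 2) := by
    funext t
    rw [Function.comp_apply, hr, Finset.sum_sub_distrib,
      sum_norm_sq_mulVec_of_mem_unitaryGroup U.2, add_sub_assoc]
  refine ENat.forall_natCast_le_iff_le.mp fun k hk => ?_
  rcases Nat.eq_zero_or_pos k with rfl | hk0
  · exact_mod_cast zero_le
  rw [natCast_le_vord_iff hk0, hrγ]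
  refine ((Complex.reCLM.isBigO_comp _ _).trans
    (isBigO_comp_of_le_iInf_ordAlong hγc hh (Ideal.subset_span (Or.inl rfl)) hk0 hk)).add
    (IsBigO.fun_sum fun j _ => (hbdd (hfj j)).norm_sq_sub_norm_sq (hbdd (hVgj j)) ?_)
  exact isBigO_comp_of_le_iInf_ordAlong hγc ((hfj j).sub (hVgj j))
    (Ideal.subset_span (Or.inr ⟨j, rfl⟩)) hk0 hk
end

section
/- Let M = {z ∈ ℂ⁴ : Re z₄ + |z₁² − z₂z₃|² + |z₂|⁴ = 0} and let γ(t) = (t, −(a/b)t, 0, 0) for nonzero complex constants a, b. Then the order of vanishing at t = 0 of r ∘ γ, where r(z) = Re z₄ + |z₁² − z₂z₃|² + |z₂|⁴, equals 4, and γ is contained in the hyperplane {a z₁ + b z₂ + c z₃ + z₄ = 0} for any c. -/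
/-! Along `γ` the defining function is exactly `(1 + ‖a/b‖⁴)‖t‖⁴`, and a function comparable to
`‖t‖ⁿ` near `0` vanishes to order exactly `n`, because `‖t‖ᵐ = o(‖t‖ᵏ)` whenever `k < m`. -/

open Filter Asymptotics Topology

theorem isBigO_norm_pow_norm_pow_iff {E : Type*} [NormedAddCommGroup E] [NormedSpace ℝ E]
    [Nontrivial E] {m n : ℕ} :
    (fun x : E => ‖x‖ ^ n) =O[𝓝 0] (fun x => ‖x‖ ^ m) ↔ m ≤ n := by
  refine ⟨fun h => ?_, fun h => ?_⟩
  · by_contra! hlt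
    have hne : ∃ᶠ x in 𝓝 (0 : E), ‖‖x‖ ^ n‖ ≠ 0 :=
      ((eventually_mem_nhdsWithin (s := {0}ᶜ)).frequently.filter_mono nhdsWithin_le_nhds).mono
        fun x hx => by simpa using pow_ne_zero n (norm_ne_zero_iff.mpr hx)
    exact isLittleO_irrefl' hne (h.trans_isLittleO (isLittleO_norm_pow_norm_pow hlt))
  · rcases h.eq_or_lt with rfl | hlt
    · exact isBigO_refl _ _
    · exact (isLittleO_norm_pow_norm_pow hlt).isBigO

theorem vord_eq_of_isTheta {E : Type*} [NormedAddCommGroup E] {f : ℂ → E} {n : ℕ}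
    (hf : f =Θ[𝓝 0] fun t => ‖t‖ ^ n) : vord f = n := by
  have hmem : ∀ k : ℕ, f =O[𝓝 0] (fun t => ‖t‖ ^ k) ↔ k ≤ n := fun k =>
    ⟨fun h => isBigO_norm_pow_norm_pow_iff.mp (hf.symm.isBigO.trans h),
      fun h => hf.isBigO.trans (isBigO_norm_pow_norm_pow_iff.mpr h)⟩
  refine le_antisymm (sSup_le ?_) (le_sSup ⟨n, rfl, (hmem n).mpr le_rfl⟩)
  rintro _ ⟨k, rfl, hk⟩
  exact_mod_cast (hmem k).mp hk

theorem vord_const_mul_norm_pow {c : ℝ} (hc : c ≠ 0) (n : ℕ) :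
    vord (fun t : ℂ => c * ‖t‖ ^ n) = n :=
  vord_eq_of_isTheta ((isTheta_refl _ _).const_mul_left hc)

theorem example_curve_type_four_general (a b : ℂ) (hb : b ≠ 0)
    (r : (Fin 4 → ℂ) → ℝ)
    (hr : ∀ z, r z = (z 3).re + ‖z 0 ^ 2 - z 1 * z 2‖ ^ 2
      + ‖z 1‖ ^ 4)
    (γ : ℂ → (Fin 4 → ℂ)) (hγ : ∀ t, γ t = ![t, -(a / b) * t, 0, 0]) :
    vord (fun t => (r (γ t) : ℝ)) = 4 ∧
      ∀ c t, a * γ t 0 + b * γ t 1 + c * γ t 2 + γ t 3 = 0 := by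
  have hrγ : (fun t => r (γ t)) = fun t => (1 + ‖a / b‖ ^ 4) * ‖t‖ ^ 4 := by
    funext t
    simp only [hr, hγ, Matrix.cons_val, Matrix.cons_val_zero, Matrix.cons_val_one,
      Complex.zero_re, mul_zero, sub_zero, zero_add, norm_pow, norm_neg, norm_mul, mul_pow]
    ring
  refine ⟨?_, fun c t => ?_⟩
  · rw [hrγ]
    exact vord_const_mul_norm_pow (by positivity) 4
  · simp only [hγ, Matrix.cons_val, Matrix.cons_val_zero, Matrix.cons_val_one, mul_zero, add_zero]
    field_simp
    ring

/-- For `r(z) = Re z₄ + |z₁² − z₂z₃|² + |z₂|⁴` on `ℂ⁴` and the curve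
`γ(t) = (t, −(a/b)t, 0, 0)` with `a, b ≠ 0`, the order of vanishing of `r ∘ γ` at `0` is `4`,
and `γ` lies in the hyperplane `{a z₁ + b z₂ + c z₃ + z₄ = 0}` for every `c`. -/
theorem example_curve_type_four (a b : ℂ) (ha : a ≠ 0) (hb : b ≠ 0)
    (r : (Fin 4 → ℂ) → ℝ)
    (hr : ∀ z, r z = (z 3).re + ‖z 0 ^ 2 - z 1 * z 2‖ ^ 2
      + ‖z 1‖ ^ 4)
    (γ : ℂ → (Fin 4 → ℂ)) (hγ : ∀ t, γ t = ![t, -(a / b) * t, 0, 0]) :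
    vord (fun t => (r (γ t) : ℝ)) = 4 ∧
      ∀ c t, a * γ t 0 + b * γ t 1 + c * γ t 2 + γ t 3 = 0 :=
  example_curve_type_four_general a b hb r hr γ hγ
end

section
/- Let r(z) = Re z₄ + |z₁² − z₂z₃|² + |z₂|⁴ on ℂ⁴ and fix ε ≠ 0 and nonzero a, b ∈ ℂ. Define the holomorphic curve germ γ(t) = (t, z₂(t), z₃(t), 0) at t = 0, where z₂, z₃ are the holomorphic germs satisfying z₂(t)z₃(t) = t² and a t + b z₂(t) + z₃(t) = ε with z₂(0) = 0, z₃(0) = ε, namely z₂(t) = ((ε − at)(1 − √(1 − 4bt²/(ε − at)²)))/(2b) and z₃(t) = ε − at − b z₂(t). Then the order of vanishing of r ∘ γ at t = 0 is 8. -/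
open Filter Asymptotics Topology

/-- For `r(z) = Re z₄ + |z₁² − z₂z₃|² + |z₂|⁴` and the holomorphic curve
`γ(t) = (t, z₂(t), z₃(t), 0)` where `z₂, z₃` are the holomorphic germs with
`z₂(t)z₃(t) = t²`, `a t + b z₂(t) + z₃(t) = ε`, `z₂(0) = 0`, `z₃(0) = ε`
(for `ε ≠ 0` and nonzero `a, b`), the order of vanishing of `r ∘ γ` at `0` is `8`. -/
theorem example_curve_type_eight (a b ε : ℂ) (ha : a ≠ 0) (hb : b ≠ 0) (hε : ε ≠ 0)
    (r : (Fin 4 → ℂ) → ℝ)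
    (hr : ∀ z, r z = (z 3).re + ‖z 0 ^ 2 - z 1 * z 2‖ ^ 2
      + ‖z 1‖ ^ 4)
    (z₂ z₃ : ℂ → ℂ) (hz₂ : AnalyticAt ℂ z₂ 0) (hz₃ : AnalyticAt ℂ z₃ 0)
    (hz₂0 : z₂ 0 = 0) (hz₃0 : z₃ 0 = ε)
    (heq : ∀ᶠ t in nhds (0 : ℂ), z₂ t * z₃ t = t ^ 2 ∧ a * t + b * z₂ t + z₃ t = ε)
    (γ : ℂ → (Fin 4 → ℂ)) (hγ : ∀ t, γ t = ![t, z₂ t, z₃ t, 0]) :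
    vord (fun t => (r (γ t) : ℝ)) = 8 := by
  set f : ℂ → ℝ := fun t => r (γ t) with hf
  have hc : (0:ℝ) < ‖ε‖ := norm_pos_iff.mpr hε
  have hz₃c : Filter.Tendsto z₃ (nhds 0) (nhds ε) := by
    simpa [hz₃0] using hz₃.continuousAt.tendsto
  have hball : ∀ᶠ t in nhds (0:ℂ), ‖z₃ t - ε‖ < ‖ε‖/2 := by
    have h1 : ∀ᶠ w in nhds ε, ‖w - ε‖ < ‖ε‖/2 :=
      Filter.eventually_of_mem (Metric.ball_mem_nhds ε (by linarith : (0:ℝ) < ‖ε‖/2))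
        (fun w hw => by simpa [dist_eq_norm] using hw)
    exact hz₃c.eventually h1
  have key : ∀ᶠ t in nhds (0:ℂ),
      ‖t‖^8 / (16*‖ε‖^4) ≤ f t ∧ f t ≤ 16/‖ε‖^4 * ‖t‖^8 := by
    filter_upwards [heq, hball] with t ht hB
    obtain ⟨ht1, -⟩ := ht
    have hfeq : f t = ‖z₂ t‖^4 := by
      simp [hf, hr, hγ, ht1]
    have hub : ‖z₃ t‖ ≤ 2*‖ε‖ := by
      have := norm_le_norm_add_norm_sub' (z₃ t) ε
      calc ‖z₃ t‖ ≤ ‖ε‖ + ‖z₃ t - ε‖ := by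
            have := norm_sub_norm_le (z₃ t) ε; linarith [abs_norm_sub_norm_le (z₃ t) ε]
        _ ≤ 2*‖ε‖ := by linarith
    have hlb : ‖ε‖/2 ≤ ‖z₃ t‖ := by
      have := abs_norm_sub_norm_le (z₃ t) ε
      have h2 : |‖z₃ t‖ - ‖ε‖| < ‖ε‖/2 := lt_of_le_of_lt this hB
      have := abs_lt.mp h2
      linarith [this.1]
    have hAB : ‖z₂ t‖ * ‖z₃ t‖ = ‖t‖^2 := by
      rw [← norm_mul, ht1, norm_pow]
    have hA0 : 0 ≤ ‖z₂ t‖ := norm_nonneg _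
    have hB0 : 0 < ‖z₃ t‖ := by linarith
    have hAB4 : ‖z₂ t‖^4 * ‖z₃ t‖^4 = ‖t‖^8 := by
      have : (‖z₂ t‖ * ‖z₃ t‖)^4 = (‖t‖^2)^4 := by rw [hAB]
      calc ‖z₂ t‖^4 * ‖z₃ t‖^4 = (‖z₂ t‖ * ‖z₃ t‖)^4 := by ring
        _ = (‖t‖^2)^4 := by rw [hAB]
        _ = ‖t‖^8 := by ring
    have hB4ub : ‖z₃ t‖^4 ≤ 16*‖ε‖^4 := by
      have := pow_le_pow_left₀ hB0.le hub 4
      nlinarith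
    have hB4lb : ‖ε‖^4/16 ≤ ‖z₃ t‖^4 := by
      have := pow_le_pow_left₀ (by positivity : (0:ℝ) ≤ ‖ε‖/2) hlb 4
      nlinarith
    constructor
    · rw [hfeq, div_le_iff₀ (by positivity)]
      nlinarith [pow_nonneg hA0 4]
    · rw [hfeq]
      rw [div_mul_eq_mul_div, le_div_iff₀ (by positivity)]
      nlinarith [pow_nonneg hA0 4, mul_le_mul_of_nonneg_left hB4lb (pow_nonneg hA0 4)]
  have fnonneg : ∀ᶠ t in nhds (0:ℂ), 0 ≤ f t := by
    filter_upwards [key] with t ht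
    exact le_trans (by positivity) ht.1
  -- upper estimate: f = O(‖t‖^8)
  have hO8 : f =O[nhds (0:ℂ)] fun t => ‖t‖^8 := by
    apply IsBigO.of_bound (16/‖ε‖^4)
    filter_upwards [key, fnonneg] with t ht hn
    rw [Real.norm_of_nonneg hn, Real.norm_of_nonneg (by positivity)]
    exact ht.2
  rw [vord]
  apply le_antisymm
  · apply sSup_le
    rintro m ⟨k, rfl, hO⟩
    by_contra hk
    push_neg at hk
    have hk9 : 9 ≤ k := by
      by_contra h
      push_neg at h
      interval_cases k <;> simp_all <;> norm_num at hk
    obtain ⟨C, hC⟩ := hO.bound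
    have hδpos : 0 < min 1 ((1/(16*‖ε‖^4))/(|C|+1)) := lt_min one_pos (by positivity)
    have hsmall : ∀ᶠ t in nhds (0:ℂ), ‖t‖ < min 1 ((1/(16*‖ε‖^4))/(|C|+1)) :=
      Filter.eventually_of_mem (Metric.ball_mem_nhds (0:ℂ) hδpos)
        (fun t ht => by simpa [dist_zero_right] using ht)
    obtain ⟨t, ⟨⟨hlow, -⟩, hn, hCt, hsm⟩, ht0⟩ :=
      ((((key.and (fnonneg.and (hC.and hsmall)))).filter_mono
        (nhdsWithin_le_nhds (s := {(0:ℂ)}ᶜ))).and eventually_mem_nhdsWithin).exists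
    have ht0' : t ≠ 0 := ht0
    have hT : 0 < ‖t‖ := norm_pos_iff.mpr ht0'
    have h1 : ‖t‖ ≤ 1 := le_of_lt (lt_of_lt_of_le hsm (min_le_left _ _))
    have h2 : ‖t‖ < (1/(16*‖ε‖^4))/(|C|+1) := lt_of_lt_of_le hsm (min_le_right _ _)
    have hpk : ‖t‖^k ≤ ‖t‖^9 := pow_le_pow_of_le_one hT.le h1 hk9
    have hfle : f t ≤ (|C|+1) * (‖t‖^8 * ‖t‖) := by
      have hCt' : ‖f t‖ ≤ C * ‖t‖^k := by
        have : ‖‖t‖^k‖ = ‖t‖^k := Real.norm_of_nonneg (pow_nonneg hT.le k)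
        rw [this] at hCt; exact hCt
      have s1 : C * ‖t‖^k ≤ (|C|+1) * ‖t‖^k :=
        mul_le_mul_of_nonneg_right (by linarith [le_abs_self C]) (pow_nonneg hT.le k)
      have s2 : (|C|+1) * ‖t‖^k ≤ (|C|+1) * ‖t‖^9 :=
        mul_le_mul_of_nonneg_left hpk (by positivity)
      calc f t = ‖f t‖ := (Real.norm_of_nonneg hn).symm
        _ ≤ C * ‖t‖^k := hCt'
        _ ≤ (|C|+1) * ‖t‖^9 := le_trans s1 s2
        _ = (|C|+1) * (‖t‖^8 * ‖t‖) := by ring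
    have hED : (|C|+1) * ‖t‖ < 1/(16*‖ε‖^4) := by
      rw [lt_div_iff₀ (by positivity : (0:ℝ) < |C|+1)] at h2
      linarith [h2]
    have hfinal : 1/(16*‖ε‖^4) ≤ (|C|+1) * ‖t‖ := by
      have h8 : (0:ℝ) < ‖t‖^8 := by positivity
      have hx : ‖t‖^8 * (1/(16*‖ε‖^4)) ≤ ‖t‖^8 * ((|C|+1)*‖t‖) := by
        calc ‖t‖^8 * (1/(16*‖ε‖^4)) = ‖t‖^8/(16*‖ε‖^4) := by ring
          _ ≤ f t := hlow
          _ ≤ (|C|+1) * (‖t‖^8 * ‖t‖) := hfle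
          _ = ‖t‖^8 * ((|C|+1)*‖t‖) := by ring
      exact le_of_mul_le_mul_left hx h8
    linarith
  · apply le_sSup
    exact ⟨8, by norm_num, hO8⟩
end
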